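/- Let k, ℓ, m ≥ 1 and let G be a (kℓ)×m standard real Gaussian matrix, with rows indexed by Fin k × Fin ℓ and columns by Fin m, with i.i.d. real Gaussian entries of mean 0 and variance 1. Let W = G Gᵀ be the associated real Wishart matrix, and let W^Γ be its partial transpose on the ℓ-dimensional factor, defined entrywise by W^Γ((a,b),(a',b')) = W((a,b'),(a',b)). Then E[ trace(W^Γ) ] = kℓm and E[ trace((W^Γ)²) ] = k²ℓ²m + kℓm² + kℓm. -/

import Mathlib

open MeasureTheory ProbabilityTheory Matrix

/-- The law of a `(kℓ) × m` standard real Gaussian matrix with rows indexed by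
`Fin k × Fin ℓ` and columns by `Fin m`: i.i.d. entries, each real Gaussian of mean `0` and
variance `1`. -/
noncomputable def realGaussianKLM (k ℓ m : ℕ) : Measure ((Fin k × Fin ℓ) × Fin m → ℝ) :=
  Measure.pi fun _ => gaussianReal 0 1

/-- The real Gaussian matrix `G` with entries `g(r,c) = ω(r,c)`. -/
def gMatR {k ℓ m : ℕ} (ω : (Fin k × Fin ℓ) × Fin m → ℝ) :
    Matrix (Fin k × Fin ℓ) (Fin m) ℝ :=
  Matrix.of fun r c => ω (r, c)

/-- The real Wishart matrix `W = G Gᵀ`. -/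
def wishartR {k ℓ m : ℕ} (ω : (Fin k × Fin ℓ) × Fin m → ℝ) :
    Matrix (Fin k × Fin ℓ) (Fin k × Fin ℓ) ℝ :=
  gMatR ω * (gMatR ω)ᵀ

/-- The partial transpose on the `ℓ`-dimensional factor:
`W^Γ((a,b),(a',b')) = W((a,b'),(a',b))`. -/
def wishartRPT {k ℓ m : ℕ} (ω : (Fin k × Fin ℓ) × Fin m → ℝ) :
    Matrix (Fin k × Fin ℓ) (Fin k × Fin ℓ) ℝ :=
  Matrix.of fun r r' => wishartR ω (r.1, r'.2) (r'.1, r.2)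

/-!
Partial transposition only permutes the entries of `W`, and it preserves both `tr W = ∑ W(p,p)`
and `tr W² = ∑ W(p,q) W(q,p)`, so the two moments are those of the Wishart matrix `W = G Gᵀ`.
There `tr W = ∑ g(r,c)²` and `tr W² = ∑ g(x,i) g(y,i) g(y,j) g(x,j)` over rows `x, y` and columns
`i, j`. By independence and the symmetry `g ↦ -g` of each entry, such a term has expectation
`E g⁴ = 3` if `x = y` and `i = j`, `(E g²)² = 1` if exactly one of these holds, and `0` otherwise.
The Gaussian moments are read off the moment generating function `exp (t² / 2)`.
-/

open Polynomial Real
open scoped NNReal ENNReal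

namespace Matrix
variable {α β R : Type*} [Fintype α] [Fintype β]

def partialTranspose (M : Matrix (α × β) (α × β) R) : Matrix (α × β) (α × β) R :=
  of fun r r' => M (r.1, r'.2) (r'.1, r.2)

lemma trace_partialTranspose [AddCommMonoid R] (M : Matrix (α × β) (α × β) R) :
    M.partialTranspose.trace = M.trace := rfl

lemma trace_partialTranspose_mul_self [NonUnitalNonAssocSemiring R]
    (M : Matrix (α × β) (α × β) R) :
    (M.partialTranspose * M.partialTranspose).trace = (M * M).trace := by
  let swap : Function.Involutive fun p : (α × β) × (α × β) => ((p.1.1, p.2.2), (p.2.1, p.1.2)) :=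
    fun _ => rfl
  simp only [trace, diag, mul_apply, ← Fintype.sum_prod_type']
  exact Fintype.sum_equiv swap.toPerm _ _ fun _ => rfl

variable {m n : Type*} [Fintype m] [Fintype n]

lemma trace_mul_transpose [NonUnitalNonAssocSemiring R] (G : Matrix m n R) :
    (G * Gᵀ).trace = ∑ r, ∑ c, G r c * G r c := by
  simp [trace, mul_apply]

lemma trace_mul_transpose_mul_self [NonUnitalCommSemiring R] (G : Matrix m n R) :
    (G * Gᵀ * (G * Gᵀ)).trace = ∑ x, ∑ y, ∑ i, ∑ j, G x i * G y i * (G y j * G x j) := by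
  simp [trace, mul_apply, Finset.sum_mul_sum]

end Matrix

noncomputable def gaussianMomentPoly : ℕ → ℝ[X]
  | 0 => 1
  | n + 1 => derivative (gaussianMomentPoly n) + X * gaussianMomentPoly n

lemma iteratedDeriv_exp_sq_div_two (n : ℕ) :
    iteratedDeriv n (fun t => exp (t ^ 2 / 2)) =
      fun t => (gaussianMomentPoly n).eval t * exp (t ^ 2 / 2) := by
  induction n with
  | zero => simp [gaussianMomentPoly]
  | succ n ih =>
    rw [iteratedDeriv_succ, ih]
    funext t
    have h := ((gaussianMomentPoly n).hasDerivAt t).fun_mul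
      (((hasDerivAt_pow 2 t).div_const 2).exp)
    rw [h.deriv, gaussianMomentPoly]
    simp only [eval_add, eval_mul, eval_X]
    ring

lemma integral_pow_gaussianReal (n : ℕ) :
    ∫ x, x ^ n ∂gaussianReal 0 1 = (gaussianMomentPoly n).eval 0 := by
  have h := iteratedDeriv_mgf_zero (X := id) (μ := gaussianReal 0 1) (by simp) n
  simp only [mgf_id_gaussianReal, zero_mul, NNReal.coe_one, one_mul, zero_add,
    iteratedDeriv_exp_sq_div_two] at h
  simpa using h.symm

lemma integral_sq_gaussianReal : ∫ x, x ^ 2 ∂gaussianReal 0 1 = 1 := by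
  simp [integral_pow_gaussianReal, gaussianMomentPoly]

lemma integral_pow_four_gaussianReal : ∫ x, x ^ 4 ∂gaussianReal 0 1 = 3 := by
  norm_num [integral_pow_gaussianReal, gaussianMomentPoly]


section Symmetric
variable {ι : Type*} [Fintype ι] [DecidableEq ι] {μ : ι → Measure ℝ} [∀ i, SigmaFinite (μ i)]

lemma integral_pi_eq_zero_of_odd_eval {a : ι} (hμ : (μ a).map (fun x => -x) = μ a)
    {F : (ι → ℝ) → ℝ} (hF : AEStronglyMeasurable F (Measure.pi μ))
    (hodd : ∀ ω, F (fun i => if i = a then -ω i else ω i) = -F ω) :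
    ∫ ω, F ω ∂Measure.pi μ = 0 := by
  have hflip : MeasurePreserving (fun (ω : ι → ℝ) i => if i = a then -ω i else ω i)
      (Measure.pi μ) (Measure.pi μ) := by
    refine measurePreserving_pi μ μ (f := fun i x => if i = a then -x else x) fun i => ?_
    by_cases h : i = a
    · subst h; simpa using ⟨measurable_neg, hμ⟩
    · simp only [h, if_false]; exact MeasurePreserving.id (μ i)
  have h := integral_map hflip.measurable.aemeasurable (hflip.map_eq ▸ hF)
  rw [hflip.map_eq] at h
  simp only [hodd, integral_neg] at h
  linarith

end Symmetric

section Independent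
variable {ι : Type*} [Fintype ι] {μ : ι → Measure ℝ} [∀ i, IsProbabilityMeasure (μ i)]

lemma integral_comp_eval_mul_comp_eval {a b : ι} (hab : a ≠ b) {f g : ℝ → ℝ}
    (hf : Measurable f) (hg : Measurable g) :
    ∫ ω, f (ω a) * g (ω b) ∂Measure.pi μ = (∫ x, f x ∂μ a) * ∫ x, g x ∂μ b := by
  have hind : IndepFun (fun ω : ι → ℝ => ω a) (fun ω => ω b) (Measure.pi μ) :=
    (iIndepFun_pi (X := fun _ => id) fun _ => aemeasurable_id).indepFun hab
  refine ((hind.comp hf hg).integral_fun_mul_eq_mul_integral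
    (hf.comp (measurable_pi_apply a)).aestronglyMeasurable
    (hg.comp (measurable_pi_apply b)).aestronglyMeasurable).trans ?_
  exact congr_arg₂ (· * ·) (integral_comp_eval hf.aestronglyMeasurable)
    (integral_comp_eval hg.aestronglyMeasurable)

end Independent

lemma integrable_mul_mul_mul_of_memLp_four {Ω : Type*} [MeasurableSpace Ω] {μ : Measure Ω}
    {f₁ f₂ f₃ f₄ : Ω → ℝ} (h₁ : MemLp f₁ 4 μ) (h₂ : MemLp f₂ 4 μ) (h₃ : MemLp f₃ 4 μ)
    (h₄ : MemLp f₄ 4 μ) :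
    Integrable (fun ω => f₁ ω * f₂ ω * (f₃ ω * f₄ ω)) μ := by
  have : ENNReal.HolderTriple 4 4 2 := ⟨by
    rw [← two_mul, show (4 : ℝ≥0∞) = 2 * 2 by norm_num, ENNReal.mul_inv (by simp) (by simp),
      ← mul_assoc, ENNReal.mul_inv_cancel (by simp) (by simp), one_mul]⟩
  exact (h₂.mul' h₁ (r := 2)).integrable_mul (h₄.mul' h₃ (r := 2))

noncomputable abbrev stdGaussianPi (ι : Type*) [Fintype ι] : Measure (ι → ℝ) :=
  Measure.pi fun _ => gaussianReal 0 1

section StdGaussianPi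
variable {ι : Type*} [Fintype ι]

lemma memLp_eval_stdGaussianPi (a : ι) {p : ℝ≥0∞} (hp : p ≠ ∞) :
    MemLp (fun ω => ω a) p (stdGaussianPi ι) :=
  (memLp_id_gaussianReal' p hp).comp_measurePreserving (measurePreserving_eval _ a)

lemma integral_eval_sq_stdGaussianPi (a : ι) : ∫ ω, ω a ^ 2 ∂stdGaussianPi ι = 1 := by
  rw [integral_comp_eval (f := (· ^ 2)) (by fun_prop), integral_sq_gaussianReal]

lemma integral_eval_pow_four_stdGaussianPi (a : ι) : ∫ ω, ω a ^ 4 ∂stdGaussianPi ι = 3 := by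
  rw [integral_comp_eval (f := (· ^ 4)) (by fun_prop), integral_pow_four_gaussianReal]

lemma integral_eval_sq_mul_eval_sq_stdGaussianPi {a b : ι} (hab : a ≠ b) :
    ∫ ω, ω a ^ 2 * ω b ^ 2 ∂stdGaussianPi ι = 1 := by
  rw [integral_comp_eval_mul_comp_eval hab (f := (· ^ 2)) (g := (· ^ 2)) (by fun_prop)
    (by fun_prop), integral_sq_gaussianReal, one_mul]

lemma integral_sum_sq_stdGaussianPi : ∫ ω, ∑ a, ω a ^ 2 ∂stdGaussianPi ι = Fintype.card ι := by
  rw [integral_finsetSum _ fun a _ =>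
    (memLp_eval_stdGaussianPi a ENNReal.ofNat_ne_top).integrable_sq]
  simp [integral_eval_sq_stdGaussianPi]

end StdGaussianPi

section FourCycle
variable {R C : Type*} [Fintype R] [Fintype C]

lemma integral_fourCycle_stdGaussianPi [DecidableEq R] [DecidableEq C] (x y : R) (i j : C) :
    ∫ ω, ω (x, i) * ω (y, i) * (ω (y, j) * ω (x, j)) ∂stdGaussianPi (R × C) =
      (if x = y then 1 else 0) + (if i = j then 1 else 0) +
        (if x = y then 1 else 0) * (if i = j then 1 else 0) := by
  rcases eq_or_ne x y with rfl | hxy <;> rcases eq_or_ne i j with rfl | hij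
  · calc _ = ∫ ω, ω (x, i) ^ 4 ∂stdGaussianPi (R × C) := by congr 1 with ω; ring
      _ = _ := by norm_num [integral_eval_pow_four_stdGaussianPi]
  · calc _ = ∫ ω, ω (x, i) ^ 2 * ω (x, j) ^ 2 ∂stdGaussianPi (R × C) := by congr 1 with ω; ring
      _ = _ := by simp [integral_eval_sq_mul_eval_sq_stdGaussianPi, hij]
  · calc _ = ∫ ω, ω (x, i) ^ 2 * ω (y, i) ^ 2 ∂stdGaussianPi (R × C) := by congr 1 with ω; ring
      _ = _ := by simp [integral_eval_sq_mul_eval_sq_stdGaussianPi, hxy]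
  · -- the entry `ω (x, i)` occurs only once
    rw [integral_pi_eq_zero_of_odd_eval (a := (x, i)) (by rw [gaussianReal_map_neg, neg_zero])
      (by fun_prop)]
    · simp [hxy, hij]
    · intro ω
      simp [hxy.symm, hij.symm]

lemma integral_sum_fourCycle_stdGaussianPi :
    ∫ ω, ∑ x, ∑ y, ∑ i, ∑ j, ω (x, i) * ω (y, i) * (ω (y, j) * ω (x, j)) ∂stdGaussianPi (R × C) =
      (Fintype.card R : ℝ) ^ 2 * Fintype.card C + Fintype.card R * Fintype.card C ^ 2 +
        Fintype.card R * Fintype.card C := by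
  classical
  have hL4 (a : R × C) := memLp_eval_stdGaussianPi a (p := 4) ENNReal.ofNat_ne_top
  have hint (x y : R) (i j : C) := integrable_mul_mul_mul_of_memLp_four
    (hL4 (x, i)) (hL4 (y, i)) (hL4 (y, j)) (hL4 (x, j))
  simp (disch := intro _ _; fun_prop) only [integral_finsetSum, integral_fourCycle_stdGaussianPi]
  simp [Finset.sum_add_distrib, Finset.sum_ite_eq]
  ring

end FourCycle

lemma wishartRPT_eq_partialTranspose {k ℓ m : ℕ} (ω : (Fin k × Fin ℓ) × Fin m → ℝ) :
    wishartRPT ω = (wishartR ω).partialTranspose :=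
  rfl

lemma trace_wishartRPT {k ℓ m : ℕ} (ω : (Fin k × Fin ℓ) × Fin m → ℝ) :
    (wishartRPT ω).trace = ∑ a, ω a ^ 2 := by
  rw [wishartRPT_eq_partialTranspose, trace_partialTranspose, wishartR,
    trace_mul_transpose, ← Fintype.sum_prod_type']
  simp [gMatR, sq]

lemma trace_wishartRPT_mul_self {k ℓ m : ℕ} (ω : (Fin k × Fin ℓ) × Fin m → ℝ) :
    (wishartRPT ω * wishartRPT ω).trace =
      ∑ x, ∑ y, ∑ i, ∑ j, ω (x, i) * ω (y, i) * (ω (y, j) * ω (x, j)) := by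
  rw [wishartRPT_eq_partialTranspose, trace_partialTranspose_mul_self, wishartR,
    trace_mul_transpose_mul_self]
  rfl

theorem real_wishart_partial_transpose_moments_general {k ℓ m : ℕ} :
    (∫ ω : (Fin k × Fin ℓ) × Fin m → ℝ, (wishartRPT ω).trace ∂(realGaussianKLM k ℓ m)
        = (k : ℝ) * ℓ * m) ∧
    (∫ ω : (Fin k × Fin ℓ) × Fin m → ℝ,
          (wishartRPT ω * wishartRPT ω).trace ∂(realGaussianKLM k ℓ m)
        = (k : ℝ) ^ 2 * (ℓ : ℝ) ^ 2 * m + (k : ℝ) * ℓ * (m : ℝ) ^ 2 + (k : ℝ) * ℓ * m) := by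
  simp only [trace_wishartRPT, trace_wishartRPT_mul_self]
  constructor
  · refine (integral_sum_sq_stdGaussianPi (ι := (Fin k × Fin ℓ) × Fin m)).trans ?_
    simp [mul_assoc]
  · refine (integral_sum_fourCycle_stdGaussianPi (R := Fin k × Fin ℓ) (C := Fin m)).trans ?_
    simp only [Fintype.card_prod, Fintype.card_fin, Nat.cast_mul]
    ring

/-- First and second moments of a partially transposed real Wishart matrix:
`E[tr(W^Γ)] = kℓm` and `E[tr((W^Γ)²)] = k²ℓ²m + kℓm² + kℓm`. -/
theorem real_wishart_partial_transpose_moments {k ℓ m : ℕ}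
    (hk : 1 ≤ k) (hℓ : 1 ≤ ℓ) (hm : 1 ≤ m) :
    (∫ ω : (Fin k × Fin ℓ) × Fin m → ℝ, (wishartRPT ω).trace ∂(realGaussianKLM k ℓ m)
        = (k : ℝ) * ℓ * m) ∧
    (∫ ω : (Fin k × Fin ℓ) × Fin m → ℝ,
          (wishartRPT ω * wishartRPT ω).trace ∂(realGaussianKLM k ℓ m)
        = (k : ℝ) ^ 2 * (ℓ : ℝ) ^ 2 * m + (k : ℝ) * ℓ * (m : ℝ) ^ 2 + (k : ℝ) * ℓ * m) :=
  real_wishart_partial_transpose_moments_general
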